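/- arXiv:2112.06092 — 4 statements merged into one kernel-verified Lean document; each statement's English description precedes it below -/
import Mathlib

section
/- Let L : X → Y be a morphism in a 2-category (or bicategory) with right adjoint R such that the counit LR → id_Y is invertible. If f : U → Y is a morphism, p : U → V is a morphism, and Rf admits a left Kan extension p_!(Rf) along p, then L ∘ p_!(Rf) is a left Kan extension of f ≅ LRf along p. -/
open CategoryTheory Bicategory

universe w v u

/-! Whiskering a left Kan extension by a left adjoint `L` gives a left Kan extension of
`(f ≫ R) ≫ L`; when the counit of `L ⊣ R` is invertible, this is isomorphic to `f`, and
precomposing the unit of a left Kan extension with an isomorphism keeps it Kan. -/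

namespace CategoryTheory.Bicategory.LeftExtension

variable {B : Type u} [Bicategory.{w, v} B] {a b c : B} {f : a ⟶ b} {g g' : a ⟶ c}

noncomputable def IsKan.precompIso {t : LeftExtension f g} (H : t.IsKan) (φ : g' ≅ g) :
    (LeftExtension.mk t.extension (φ.hom ≫ t.unit)).IsKan :=
  Limits.IsInitial.isInitialObj (StructuredArrow.mapIso φ.symm).functor _ H

end CategoryTheory.Bicategory.LeftExtension

open CategoryTheory.Bicategory.LeftExtension in
/-- If `L ⊣ R` with invertible counit, and `R ∘ f` admits a left Kan
extension `t` along `p`, then `L ∘ t.extension` is a left Kan extension of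
`f ≅ L ∘ R ∘ f` along `p`. -/
theorem leftKan_whisker_leftAdjoint_of_isIso_counit
    {B : Type u} [Bicategory.{w, v} B] {X Y U V : B}
    (L : X ⟶ Y) (R : Y ⟶ X) (adj : Bicategory.Adjunction L R) [IsIso adj.counit]
    (f : U ⟶ Y) (p : U ⟶ V) (t : LeftExtension p (f ≫ R)) (ht : t.IsKan) :
    Nonempty ((LeftExtension.mk (t.extension ≫ L)
      ((ρ_ f).inv ≫ f ◁ inv adj.counit ≫ (α_ f R L).inv ≫ t.unit ▷ L ≫
        (α_ p t.extension L).hom)).IsKan) := by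
  let φ : f ≅ (f ≫ R) ≫ L :=
    (ρ_ f).symm ≪≫ whiskerLeftIso f (asIso adj.counit).symm ≪≫ (α_ f R L).symm
  have hunit : (ρ_ f).inv ≫ f ◁ inv adj.counit ≫ (α_ f R L).inv ≫ t.unit ▷ L ≫
      (α_ p t.extension L).hom = φ.hom ≫ (t.whisker L).unit := by
    simp [φ]
  rw [hunit]
  exact ⟨(isKanOfWhiskerLeftAdjoint ht adj).precompIso φ⟩
end

section
/- Let R : X → Y be a morphism in a 2-category, and suppose L : Y → X is a left Kan extension of id_X along R such that the unit 2-cell id_X → L ∘ R is invertible. If moreover id_Y is a left Kan extension of R along R, then L is left adjoint to R with invertible counit given by the inverse of the 2-cell id_X → LR. -/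
open CategoryTheory Bicategory

universe w v u

/-! The unit `η : 𝟙 Y ⟶ L ≫ R` is the 2-cell which the Kan property of `𝟙 Y` attaches to
`t.unit ▷ R`, so that `R ◁ η` is `t.unit ▷ R` up to coherence. With `ε = inv t.unit`, the right
triangle collapses to `(t.unit ≫ ε) ▷ R = 𝟙`. The left triangle is an endo-2-cell of `L`, so by
the Kan property of `L` it suffices to check it after precomposing with `t.unit`, where the
interchange law again reduces it to `t.unit ≫ ε = 𝟙`. -/

namespace CategoryTheory.Bicategory

variable {B : Type u} [Bicategory.{w, v} B] {a b : B} {R : a ⟶ b}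

theorem exists_whiskerLeft_eq_of_isKan_id
    (hid : (LeftExtension.mk (𝟙 b) (ρ_ R).inv).IsKan) {h : b ⟶ b} (σ : R ⟶ R ≫ h) :
    ∃ η : 𝟙 b ⟶ h, R ◁ η = (ρ_ R).hom ≫ σ := by
  let η := LeftExtension.IsKan.desc hid (.mk h σ)
  have hfac : (ρ_ R).inv ≫ R ◁ η = σ := LeftExtension.IsKan.fac hid (.mk h σ)
  exact ⟨η, by rw [← hfac]; simp⟩

variable {L : b ⟶ a} {η : 𝟙 b ⟶ L ≫ R} {e : R ≫ L ⟶ 𝟙 a} {u : 𝟙 a ⟶ R ≫ L}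

theorem rightZigzag_eq_of_whiskerLeft_eq
    (hη : R ◁ η = (ρ_ R).hom ≫ (λ_ R).inv ≫ u ▷ R ≫ (α_ R L R).hom) (he : u ≫ e = 𝟙 _) :
    rightZigzag η e = (ρ_ R).hom ≫ (λ_ R).inv :=
  calc rightZigzag η e
      _ = 𝟙 _ ⊗≫ R ◁ η ⊗≫ e ▷ R ⊗≫ 𝟙 _ := by bicategory
      _ = 𝟙 _ ⊗≫ (u ≫ e) ▷ R ⊗≫ 𝟙 _ := by rw [hη]; bicategory
      _ = (ρ_ R).hom ≫ (λ_ R).inv := by rw [he]; bicategory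

theorem leftZigzag_eq_of_whiskerLeft_eq (hu : (LeftExtension.mk L u).IsKan)
    (hη : R ◁ η = (ρ_ R).hom ≫ (λ_ R).inv ≫ u ▷ R ≫ (α_ R L R).hom) (he : u ≫ e = 𝟙 _) :
    leftZigzag η e = (λ_ L).hom ≫ (ρ_ L).inv := by
  have hL : (λ_ L).inv ≫ leftZigzag η e ≫ (ρ_ L).hom = 𝟙 L := by
    apply LeftExtension.IsKan.hom_ext hu
    calc u ≫ R ◁ ((λ_ L).inv ≫ leftZigzag η e ≫ (ρ_ L).hom)
        _ = 𝟙 _ ⊗≫ u ⊗≫ (R ◁ η) ▷ L ⊗≫ R ◁ L ◁ e ⊗≫ 𝟙 _ := by bicategory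
        _ = 𝟙 _ ⊗≫ u ⊗≫ u ▷ (R ≫ L) ⊗≫ (R ≫ L) ◁ e ⊗≫ 𝟙 _ := by rw [hη]; bicategory
        _ = 𝟙 _ ⊗≫ u ⊗≫ (𝟙 a ◁ e ≫ u ▷ 𝟙 a) ⊗≫ 𝟙 _ := by rw [whisker_exchange]; bicategory
        _ = 𝟙 _ ⊗≫ (u ≫ e) ⊗≫ u ⊗≫ 𝟙 _ := by bicategory
        _ = u ≫ R ◁ 𝟙 L := by rw [he]; bicategory
  calc leftZigzag η e
      _ = (λ_ L).hom ≫ ((λ_ L).inv ≫ leftZigzag η e ≫ (ρ_ L).hom) ≫ (ρ_ L).inv := by simp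
      _ = (λ_ L).hom ≫ (ρ_ L).inv := by rw [hL]; simp

end CategoryTheory.Bicategory

/-- If `L = t.extension` is a left Kan extension of `𝟙 X` along `R` with
invertible unit 2-cell `𝟙 X ⟶ R ≫ L`, and `𝟙 Y` is a left Kan extension of `R` along
itself, then `L` is left adjoint to `R` with counit the inverse of that 2-cell. -/
theorem adjunction_of_isKan_of_isIso_unit
    {B : Type u} [Bicategory.{w, v} B] {X Y : B}
    (R : X ⟶ Y) (t : LeftExtension R (𝟙 X)) (ht : t.IsKan) [IsIso t.unit]
    (hid : (LeftExtension.mk (𝟙 Y) (ρ_ R).inv).IsKan) :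
    ∃ adj : Bicategory.Adjunction t.extension R, adj.counit = inv t.unit := by
  obtain ⟨η, hη⟩ := exists_whiskerLeft_eq_of_isKan_id hid
    ((λ_ R).inv ≫ t.unit ▷ R ≫ (α_ R t.extension R).hom)
  have he : t.unit ≫ inv t.unit = 𝟙 _ := IsIso.hom_inv_id t.unit
  exact ⟨⟨η, inv t.unit, leftZigzag_eq_of_whiskerLeft_eq ht hη he,
    rightZigzag_eq_of_whiskerLeft_eq hη he⟩, rfl⟩
end

section
/- Let C be a category with finite limits and let f : A → B be a morphism of equivalence groupoids in C. The homotopy class of f is a monomorphism in the homotopy category of equivalence groupoids if and only if the canonical map A₁ → A₀ ×_{B₀} B₁ ×_{B₀} A₀ is an isomorphism. -/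
open CategoryTheory CategoryTheory.Limits

universe v u

variable (C : Type u) [Category.{v} C] [HasFiniteLimits C]

/-- An equivalence groupoid in `C`: a pair of objects with a monomorphism
`X₁ ⟶ X₀ ⨯ X₀` which is an internal equivalence relation. -/
structure EqGpd where
  X₀ : C
  X₁ : C
  d₀ : X₁ ⟶ X₀
  d₁ : X₁ ⟶ X₀
  mono : Mono (prod.lift d₀ d₁)
  refl : ∀ (T : C) (x : T ⟶ X₀), ∃ h : T ⟶ X₁, h ≫ d₀ = x ∧ h ≫ d₁ = x
  symm : ∀ (T : C) (x y : T ⟶ X₀), (∃ h : T ⟶ X₁, h ≫ d₀ = x ∧ h ≫ d₁ = y) →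
    ∃ h : T ⟶ X₁, h ≫ d₀ = y ∧ h ≫ d₁ = x
  trans : ∀ (T : C) (x y z : T ⟶ X₀),
    (∃ h : T ⟶ X₁, h ≫ d₀ = x ∧ h ≫ d₁ = y) →
    (∃ h : T ⟶ X₁, h ≫ d₀ = y ∧ h ≫ d₁ = z) →
    ∃ h : T ⟶ X₁, h ≫ d₀ = x ∧ h ≫ d₁ = z

namespace EqGpd

variable {C}

/-- A morphism of equivalence groupoids. -/
@[ext]
structure Hom (A B : EqGpd C) where
  f₀ : A.X₀ ⟶ B.X₀
  f₁ : A.X₁ ⟶ B.X₁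
  w₀ : f₁ ≫ B.d₀ = A.d₀ ≫ f₀
  w₁ : f₁ ≫ B.d₁ = A.d₁ ≫ f₀

instance : Category (EqGpd C) where
  Hom A B := Hom A B
  id A := ⟨𝟙 _, 𝟙 _, by simp, by simp⟩
  comp {A B D} f g := ⟨f.f₀ ≫ g.f₀, f.f₁ ≫ g.f₁,
    by rw [Category.assoc, g.w₀, ← Category.assoc, f.w₀, Category.assoc],
    by rw [Category.assoc, g.w₁, ← Category.assoc, f.w₁, Category.assoc]⟩
  id_comp f := by apply Hom.ext <;> simp
  comp_id f := by apply Hom.ext <;> simp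
  assoc f g h := by apply Hom.ext <;> simp

@[simp] lemma comp_f₀ {A B D : EqGpd C} (f : A ⟶ B) (g : B ⟶ D) :
    (f ≫ g).f₀ = f.f₀ ≫ g.f₀ := rfl

@[simp] lemma comp_f₁ {A B D : EqGpd C} (f : A ⟶ B) (g : B ⟶ D) :
    (f ≫ g).f₁ = f.f₁ ≫ g.f₁ := rfl

@[simp] lemma id_f₀ (A : EqGpd C) : (𝟙 A : A ⟶ A).f₀ = 𝟙 A.X₀ := rfl

@[simp] lemma id_f₁ (A : EqGpd C) : (𝟙 A : A ⟶ A).f₁ = 𝟙 A.X₁ := rfl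

/-- The homotopy relation on morphisms of equivalence groupoids. -/
def htpy : HomRel (EqGpd C) := fun {A B} f g =>
  ∃ h : A.X₀ ⟶ B.X₁, h ≫ B.d₀ = f.f₀ ∧ h ≫ B.d₁ = g.f₀

/-- The embedding of `C` into equivalence groupoids via diagonals. -/
def disc : C ⥤ EqGpd C where
  obj X :=
    { X₀ := X
      X₁ := X
      d₀ := 𝟙 X
      d₁ := 𝟙 X
      mono := ⟨fun {Z} g h w => by
        calc g = (g ≫ prod.lift (𝟙 X) (𝟙 X)) ≫ prod.fst := by
              rw [Category.assoc, prod.lift_fst, Category.comp_id]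
          _ = (h ≫ prod.lift (𝟙 X) (𝟙 X)) ≫ prod.fst := by
              exact congrArg (fun t => t ≫ prod.fst) w
          _ = h := by rw [Category.assoc, prod.lift_fst, Category.comp_id]⟩
      refl := fun T x => ⟨x, by simp, by simp⟩
      symm := fun T x y ⟨h, h0, h1⟩ => ⟨h, by simpa using h1, by simpa using h0⟩
      trans := fun T x y z ⟨h, h0, h1⟩ ⟨k, k0, k1⟩ =>
        ⟨h, h0, by
          simp only [Category.comp_id] at h0 h1 k0 k1 ⊢
          rw [h1, ← k0]; exact k1⟩ }
  map {X Y} u := ⟨u, u, by simp, by simp⟩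
  map_id X := by apply Hom.ext <;> simp
  map_comp f g := by apply Hom.ext <;> simp

end EqGpd

/-!
Both sides are equivalent to `f` *reflecting the relation*: whenever `x f₀` and `y f₀` are
related in `B`, the generalized elements `x, y` of `A₀` are related in `A`.

Maps `disc T ⟶ A` are, up to homotopy, maps `T ⟶ A₀`, and homotopy between them is relatedness
in `A`; so monicity tested on the objects `disc T` is that condition. Conversely, a homotopy
between `g ≫ f` and `g' ≫ f` only involves `g₀` and `g'₀`, so the condition gives `g ~ g'`.

Generalized elements of `A₀ ×_{B₀} B₁ ×_{B₀} A₀` are exactly triples `(x, β, y)` with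
`β : x f₀ ~ y f₀`, and the canonical map is always monic because `A₁ ⟶ A₀ ⨯ A₀` is. So it is
an isomorphism iff its universal triple lifts to `A₁`, i.e. iff `f` reflects the relation.
-/

namespace EqGpd

variable {C}

lemma hom_ext_X₁ (B : EqGpd C) {T : C} {u v : T ⟶ B.X₁}
    (h₀ : u ≫ B.d₀ = v ≫ B.d₀) (h₁ : u ≫ B.d₁ = v ≫ B.d₁) : u = v := by
  have := B.mono
  rw [← cancel_mono (prod.lift B.d₀ B.d₁)]
  ext <;> simp [h₀, h₁]

instance htpyCongruence : Congruence (htpy (C := C)) where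
  equivalence :=
    { refl := fun f => (_ : EqGpd C).refl _ f.f₀
      symm := fun h => (_ : EqGpd C).symm _ _ _ h
      trans := fun h h' => (_ : EqGpd C).trans _ _ _ _ h h' }
  comp_left := by
    rintro X Y Z f g g' ⟨h, h₀, h₁⟩
    exact ⟨f.f₀ ≫ h, by simp [h₀], by simp [h₁]⟩
  comp_right := by
    rintro X Y Z f f' g ⟨h, h₀, h₁⟩
    exact ⟨h ≫ g.f₁, by simp [g.w₀, reassoc_of% h₀], by simp [g.w₁, reassoc_of% h₁]⟩

lemma exists_hom_disc_f₀_eq (A : EqGpd C) {T : C} (x : T ⟶ A.X₀) :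
    ∃ g : disc.obj T ⟶ A, g.f₀ = x := by
  obtain ⟨r, r₀, r₁⟩ := A.refl T x
  exact ⟨⟨x, r, by simpa [disc] using r₀, by simpa [disc] using r₁⟩, rfl⟩

variable {A B : EqGpd C}

def Hom.ReflectsRelation (f : A ⟶ B) : Prop :=
  ∀ (T : C) (x y : T ⟶ A.X₀) (β : T ⟶ B.X₁), β ≫ B.d₀ = x ≫ f.f₀ → β ≫ B.d₁ = y ≫ f.f₀ →
    ∃ h : T ⟶ A.X₁, h ≫ A.d₀ = x ∧ h ≫ A.d₁ = y

lemma Hom.mono_quotient_map_iff_reflectsRelation (f : A ⟶ B) :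
    Mono ((Quotient.functor (htpy (C := C))).map f) ↔ f.ReflectsRelation := by
  constructor
  · intro hf T x y β β₀ β₁
    obtain ⟨g, rfl⟩ := A.exists_hom_disc_f₀_eq x
    obtain ⟨g', rfl⟩ := A.exists_hom_disc_f₀_eq y
    have hg : (Quotient.functor htpy).map (g ≫ f) = (Quotient.functor htpy).map (g' ≫ f) :=
      (Quotient.functor_map_eq_iff _ _ _).2 ⟨β, β₀, β₁⟩
    simp only [Functor.map_comp, cancel_mono] at hg
    exact (Quotient.functor_map_eq_iff _ _ _).1 hg
  · intro hf
    refine ⟨fun {Z} g g' hg => ?_⟩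
    obtain ⟨g, rfl⟩ := (Quotient.functor htpy).map_surjective g
    obtain ⟨g', rfl⟩ := (Quotient.functor htpy).map_surjective g'
    rw [← Functor.map_comp, ← Functor.map_comp, Quotient.functor_map_eq_iff] at hg
    obtain ⟨β, β₀, β₁⟩ := hg
    rw [Quotient.functor_map_eq_iff]
    exact hf _ g.f₀ g'.f₀ β β₀ β₁

/-- The canonical map `A₁ ⟶ A₀ ×_{B₀} B₁ ×_{B₀} A₀`. -/
noncomputable def Hom.canonicalMap (f : A ⟶ B) :
    A.X₁ ⟶ pullback (pullback.snd f.f₀ B.d₀ ≫ B.d₁) f.f₀ :=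
  pullback.lift (pullback.lift A.d₀ f.f₁ f.w₀.symm) A.d₁
    (by rw [← Category.assoc, pullback.lift_snd, f.w₁])

section canonicalMap

variable (f : A ⟶ B)

@[simp]
lemma Hom.canonicalMap_fst_fst :
    f.canonicalMap ≫ pullback.fst _ _ ≫ pullback.fst f.f₀ B.d₀ = A.d₀ := by
  rw [canonicalMap, pullback.lift_fst_assoc, pullback.lift_fst]

@[simp]
lemma Hom.canonicalMap_fst_snd :
    f.canonicalMap ≫ pullback.fst _ _ ≫ pullback.snd f.f₀ B.d₀ = f.f₁ := by
  rw [canonicalMap, pullback.lift_fst_assoc, pullback.lift_snd]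

@[simp]
lemma Hom.canonicalMap_snd :
    f.canonicalMap ≫ pullback.snd (pullback.snd f.f₀ B.d₀ ≫ B.d₁) f.f₀ = A.d₁ := by
  rw [canonicalMap, pullback.lift_snd]

instance Hom.mono_canonicalMap : Mono f.canonicalMap :=
  ⟨fun g g' hg => A.hom_ext_X₁
    (by simpa using hg =≫ pullback.fst _ _ ≫ pullback.fst f.f₀ B.d₀)
    (by simpa using hg =≫ pullback.snd (pullback.snd f.f₀ B.d₀ ≫ B.d₁) f.f₀)⟩

lemma Hom.isIso_canonicalMap_iff_reflectsRelation :
    IsIso f.canonicalMap ↔ f.ReflectsRelation := by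
  constructor
  · intro _ T x y β β₀ β₁
    let t : T ⟶ pullback (pullback.snd f.f₀ B.d₀ ≫ B.d₁) f.f₀ :=
      pullback.lift (pullback.lift x β β₀.symm) y
        (by rw [← Category.assoc, pullback.lift_snd, β₁])
    refine ⟨t ≫ inv f.canonicalMap, ?_, ?_⟩
    · rw [← f.canonicalMap_fst_fst, Category.assoc, IsIso.inv_hom_id_assoc,
        pullback.lift_fst_assoc, pullback.lift_fst]
    · rw [← f.canonicalMap_snd, Category.assoc, IsIso.inv_hom_id_assoc, pullback.lift_snd]
  · intro hf
    set P := pullback (pullback.snd f.f₀ B.d₀ ≫ B.d₁) f.f₀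
    set x : P ⟶ A.X₀ := pullback.fst _ _ ≫ pullback.fst f.f₀ B.d₀
    set β : P ⟶ B.X₁ := pullback.fst _ _ ≫ pullback.snd f.f₀ B.d₀
    set y : P ⟶ A.X₀ := pullback.snd (pullback.snd f.f₀ B.d₀ ≫ B.d₁) f.f₀
    have β₀ : β ≫ B.d₀ = x ≫ f.f₀ := by simp [β, x, ← pullback.condition]
    have β₁ : β ≫ B.d₁ = y ≫ f.f₀ := by simp [β, y, pullback.condition]
    obtain ⟨s, s₀, s₁⟩ := hf P x y β β₀ β₁
    have s_f₁ : s ≫ f.f₁ = β :=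
      B.hom_ext_X₁ (by simp [f.w₀, reassoc_of% s₀, β₀]) (by simp [f.w₁, reassoc_of% s₁, β₁])
    have : IsSplitEpi f.canonicalMap := ⟨⟨s, by ext <;> simp [s₀, s₁, s_f₁, x, y, β]⟩⟩
    exact isIso_of_mono_of_isSplitEpi _

end canonicalMap

end EqGpd

/-- the homotopy class of a morphism `f : A ⟶ B` of equivalence groupoids
is a monomorphism in the homotopy category iff the canonical map
`A₁ ⟶ A₀ ×_{B₀} B₁ ×_{B₀} A₀` is an isomorphism. -/
theorem mono_in_homotopy_category_iff_isIso_canonical_map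
    (A B : EqGpd C) (f : A ⟶ B) :
    Mono ((CategoryTheory.Quotient.functor (EqGpd.htpy (C := C))).map f) ↔
      IsIso ((pullback.lift (pullback.lift A.d₀ f.f₁ f.w₀.symm) A.d₁
          (by rw [← Category.assoc, pullback.lift_snd, f.w₁]) :
        A.X₁ ⟶ pullback (pullback.snd f.f₀ B.d₀ ≫ B.d₁) f.f₀)) :=
  f.mono_quotient_map_iff_reflectsRelation.trans f.isIso_canonicalMap_iff_reflectsRelation.symm
end

section
/- Let C be a category with finite limits. For any object X of C, the functor Hom(X, -) from the homotopy category of equivalence 2-groupoids E_h^{(2)}(C) to Set sends the coequalizer of the two projections A₁ ⇉ A₀ of an equivalence 2-groupoid A to the quotient of Hom(X, A₀) by the equivalence relation 'f ~ g iff (f,g) : X → A₀ × A₀ factors through A₁'. -/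
open CategoryTheory CategoryTheory.Limits

universe v u

variable (C : Type u) [Category.{v} C] [HasFiniteLimits C]

/-- An equivalence 2-groupoid in `C`: a 1-coskeletal Kan simplicial object, presented
by a reflexive graph `X₁ ⇉ X₀` with sections of the three horn-filling maps
`A(∂Δ[2]) ⟶ A(Λⁱ[2])`. -/
structure EqTwoGpd where
  X₀ : C
  X₁ : C
  d₀ : X₁ ⟶ X₀
  d₁ : X₁ ⟶ X₀
  σ : X₀ ⟶ X₁
  σd₀ : σ ≫ d₀ = 𝟙 X₀
  σd₁ : σ ≫ d₁ = 𝟙 X₀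
  horn₁ : ∃ m : pullback d₁ d₀ ⟶ X₁,
    m ≫ d₀ = pullback.fst d₁ d₀ ≫ d₀ ∧ m ≫ d₁ = pullback.snd d₁ d₀ ≫ d₁
  horn₀ : ∃ m : pullback d₀ d₀ ⟶ X₁,
    m ≫ d₀ = pullback.fst d₀ d₀ ≫ d₁ ∧ m ≫ d₁ = pullback.snd d₀ d₀ ≫ d₁
  horn₂ : ∃ m : pullback d₁ d₁ ⟶ X₁,
    m ≫ d₀ = pullback.fst d₁ d₁ ≫ d₀ ∧ m ≫ d₁ = pullback.snd d₁ d₁ ≫ d₀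

namespace EqTwoGpd

variable {C}

/-- A morphism of equivalence 2-groupoids. -/
@[ext]
structure Hom (A B : EqTwoGpd C) where
  f₀ : A.X₀ ⟶ B.X₀
  f₁ : A.X₁ ⟶ B.X₁
  w₀ : f₁ ≫ B.d₀ = A.d₀ ≫ f₀
  w₁ : f₁ ≫ B.d₁ = A.d₁ ≫ f₀

instance : Category (EqTwoGpd C) where
  Hom A B := Hom A B
  id A := ⟨𝟙 _, 𝟙 _, by simp, by simp⟩
  comp {A B D} f g := ⟨f.f₀ ≫ g.f₀, f.f₁ ≫ g.f₁,
    by rw [Category.assoc, g.w₀, ← Category.assoc, f.w₀, Category.assoc],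
    by rw [Category.assoc, g.w₁, ← Category.assoc, f.w₁, Category.assoc]⟩
  id_comp f := by apply Hom.ext <;> simp
  comp_id f := by apply Hom.ext <;> simp
  assoc f g h := by apply Hom.ext <;> simp

/-- The homotopy relation on morphisms of equivalence 2-groupoids. -/
def htpy : HomRel (EqTwoGpd C) := fun {A B} f g =>
  ∃ h : A.X₀ ⟶ B.X₁, h ≫ B.d₀ = f.f₀ ∧ h ≫ B.d₁ = g.f₀

@[simp] lemma comp_f₀ {A B D : EqTwoGpd C} (f : A ⟶ B) (g : B ⟶ D) :
    (f ≫ g).f₀ = f.f₀ ≫ g.f₀ := rfl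

@[simp] lemma comp_f₁ {A B D : EqTwoGpd C} (f : A ⟶ B) (g : B ⟶ D) :
    (f ≫ g).f₁ = f.f₁ ≫ g.f₁ := rfl

@[simp] lemma id_f₀ (A : EqTwoGpd C) : (𝟙 A : A ⟶ A).f₀ = 𝟙 A.X₀ := rfl

@[simp] lemma id_f₁ (A : EqTwoGpd C) : (𝟙 A : A ⟶ A).f₁ = 𝟙 A.X₁ := rfl

/-- The constant equivalence 2-groupoid on an object of `C`. -/
def discObj (X : C) : EqTwoGpd C where
  X₀ := X
  X₁ := X
  d₀ := 𝟙 X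
  d₁ := 𝟙 X
  σ := 𝟙 X
  σd₀ := by simp
  σd₁ := by simp
  horn₁ := ⟨pullback.fst (𝟙 X) (𝟙 X), by simp,
    by simpa using pullback.condition (f := 𝟙 X) (g := 𝟙 X)⟩
  horn₀ := ⟨pullback.fst (𝟙 X) (𝟙 X), by simp,
    by simpa using pullback.condition (f := 𝟙 X) (g := 𝟙 X)⟩
  horn₂ := ⟨pullback.fst (𝟙 X) (𝟙 X), by simp,
    by simpa using pullback.condition (f := 𝟙 X) (g := 𝟙 X)⟩

@[simp] lemma discObj_d₀ (X : C) : (discObj X).d₀ = 𝟙 X := rfl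
@[simp] lemma discObj_d₁ (X : C) : (discObj X).d₁ = 𝟙 X := rfl
@[simp] lemma discObj_X₀ (X : C) : (discObj X).X₀ = X := rfl
@[simp] lemma discObj_X₁ (X : C) : (discObj X).X₁ = X := rfl

/-- The embedding of `C` into equivalence 2-groupoids as constant objects. -/
def disc : C ⥤ EqTwoGpd C where
  obj X := discObj X
  map {X Y} u := ⟨u, u, by simp, by simp⟩
  map_id X := by apply Hom.ext <;> simp
  map_comp f g := by apply Hom.ext <;> simp

/-- The level-0 projection `A₁ ⟶ A₀` as a morphism of constant 2-groupoids. -/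
def proj₀ (A : EqTwoGpd C) : discObj A.X₁ ⟶ discObj A.X₀ :=
  ⟨A.d₀, A.d₀, by simp, by simp⟩

/-- The level-1 projection `A₁ ⟶ A₀` as a morphism of constant 2-groupoids. -/
def proj₁ (A : EqTwoGpd C) : discObj A.X₁ ⟶ discObj A.X₀ :=
  ⟨A.d₁, A.d₁, by simp, by simp⟩

/-- A morphism `X ⟶ A₀` in `C`, as a morphism of constant 2-groupoids. -/
def discHom {X Y : C} (u : X ⟶ Y) : discObj X ⟶ discObj Y :=
  ⟨u, u, by simp, by simp⟩

end EqTwoGpd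

open EqTwoGpd

/-!
Homotopy of maps `A ⟶ B` only sees the `f₀` components: they must be connected by some
`A₀ ⟶ B₁`, and the horn fillers make this an equivalence relation. Hence the map
`disc A₀ ⟶ A` (identity on `A₀`, degeneracy on `A₁`) is an epimorphism in the homotopy
category, and a map out of `disc A₀` coequalizing the two projections descends to `A` by taking
the connecting map `A₁ ⟶ B₁` as level-one component. So `A` itself is the coequalizer, and maps
`disc X ⟶ A` up to homotopy are maps `X ⟶ A₀` up to the relation.
-/

local notation "⟦" f "⟧ₕ" => CategoryTheory.Functor.map (CategoryTheory.Quotient.functor htpy) f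

namespace EqTwoGpd

variable {C}

def Rel (A : EqTwoGpd C) {X : C} (u v : X ⟶ A.X₀) : Prop :=
  ∃ h : X ⟶ A.X₁, h ≫ A.d₀ = u ∧ h ≫ A.d₁ = v

namespace Rel

variable {A : EqTwoGpd C} {X : C} {u v w : X ⟶ A.X₀}

lemma refl (u : X ⟶ A.X₀) : A.Rel u u :=
  ⟨u ≫ A.σ, by rw [Category.assoc, A.σd₀, Category.comp_id],
    by rw [Category.assoc, A.σd₁, Category.comp_id]⟩

lemma symm (huv : A.Rel u v) : A.Rel v u := by
  obtain ⟨h, rfl, rfl⟩ := huv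
  obtain ⟨m, m₀, m₁⟩ := A.horn₀
  have hσ : h ≫ A.d₀ = (h ≫ A.d₀ ≫ A.σ) ≫ A.d₀ := by simp [A.σd₀]
  refine ⟨pullback.lift h (h ≫ A.d₀ ≫ A.σ) hσ ≫ m, ?_, ?_⟩
  · simp [m₀, pullback.lift_fst_assoc]
  · simp [m₁, pullback.lift_snd_assoc, A.σd₁]

lemma trans (huv : A.Rel u v) (hvw : A.Rel v w) : A.Rel u w := by
  obtain ⟨h, rfl, rfl⟩ := huv
  obtain ⟨h', hh', rfl⟩ := hvw
  obtain ⟨m, m₀, m₁⟩ := A.horn₁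
  exact ⟨pullback.lift h h' hh'.symm ≫ m, by simp [m₀, pullback.lift_fst_assoc],
    by simp [m₁, pullback.lift_snd_assoc]⟩

lemma comp_left {X' : C} (a : X' ⟶ X) (huv : A.Rel u v) : A.Rel (a ≫ u) (a ≫ v) := by
  obtain ⟨h, rfl, rfl⟩ := huv
  exact ⟨a ≫ h, by simp, by simp⟩

lemma map {B : EqTwoGpd C} (huv : A.Rel u v) (f : A ⟶ B) :
    B.Rel (u ≫ f.f₀) (v ≫ f.f₀) := by
  obtain ⟨h, rfl, rfl⟩ := huv
  exact ⟨h ≫ f.f₁, by simp [f.w₀], by simp [f.w₁]⟩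

end Rel

lemma htpy_iff {A B : EqTwoGpd C} (f g : A ⟶ B) : htpy f g ↔ B.Rel f.f₀ g.f₀ := Iff.rfl

lemma htpy_of_f₀_eq {A B : EqTwoGpd C} {f g : A ⟶ B} (h : f.f₀ = g.f₀) : htpy f g := by
  rw [htpy_iff, h]
  exact Rel.refl g.f₀

instance : Congruence (htpy (C := C)) where
  equivalence := ⟨fun f => Rel.refl f.f₀, Rel.symm, Rel.trans⟩
  comp_left a _ _ hfg := Rel.comp_left a.f₀ hfg
  comp_right := fun b hfg => Rel.map hfg b

lemma map_eq_iff {A B : EqTwoGpd C} (f g : A ⟶ B) :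
    ⟦f⟧ₕ = ⟦g⟧ₕ ↔ B.Rel f.f₀ g.f₀ :=
  CategoryTheory.Quotient.functor_map_eq_iff htpy f g

def counit (A : EqTwoGpd C) : discObj A.X₀ ⟶ A :=
  ⟨𝟙 _, A.σ, by simp [A.σd₀], by simp [A.σd₁]⟩

@[simp] lemma counit_f₀ (A : EqTwoGpd C) : (counit A).f₀ = 𝟙 A.X₀ := rfl

instance epi_map_counit (A : EqTwoGpd C) : Epi ⟦counit A⟧ₕ where
  left_cancellation {B} f g hfg := by
    obtain ⟨f, rfl⟩ := (Quotient.functor htpy).map_surjective f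
    obtain ⟨g, rfl⟩ := (Quotient.functor htpy).map_surjective g
    rw [← Functor.map_comp, ← Functor.map_comp, map_eq_iff] at hfg
    rw [map_eq_iff]
    simpa using hfg

lemma counit_coequalizes (A : EqTwoGpd C) :
    ⟦proj₀ A⟧ₕ ≫ ⟦counit A⟧ₕ = ⟦proj₁ A⟧ₕ ≫ ⟦counit A⟧ₕ := by
  rw [← Functor.map_comp, ← Functor.map_comp, map_eq_iff]
  exact ⟨𝟙 A.X₁, by simp [proj₀], by simp [proj₁]⟩

noncomputable def counitCofork (A : EqTwoGpd C) :
    Cofork ⟦proj₀ A⟧ₕ ⟦proj₁ A⟧ₕ :=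
  Cofork.ofπ _ (counit_coequalizes A)

noncomputable def homOfRel {A B : EqTwoGpd C} (f₀ : A.X₀ ⟶ B.X₀)
    (hf : B.Rel (A.d₀ ≫ f₀) (A.d₁ ≫ f₀)) : A ⟶ B :=
  ⟨f₀, hf.choose, hf.choose_spec.1, hf.choose_spec.2⟩

lemma counit_comp_homOfRel {A B : EqTwoGpd C} (k : discObj A.X₀ ⟶ B)
    (hk : B.Rel (A.d₀ ≫ k.f₀) (A.d₁ ≫ k.f₀)) :
    ⟦counit A ≫ homOfRel k.f₀ hk⟧ₕ = ⟦k⟧ₕ :=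
  CategoryTheory.Quotient.sound _ (htpy_of_f₀_eq (Category.id_comp _))

lemma rel_of_coequalizes {A B : EqTwoGpd C} (k : discObj A.X₀ ⟶ B)
    (hk : ⟦proj₀ A⟧ₕ ≫ ⟦k⟧ₕ = ⟦proj₁ A⟧ₕ ≫ ⟦k⟧ₕ) :
    B.Rel (A.d₀ ≫ k.f₀) (A.d₁ ≫ k.f₀) := by
  rwa [← Functor.map_comp, ← Functor.map_comp, map_eq_iff] at hk

noncomputable def isColimitCounitCofork (A : EqTwoGpd C) : IsColimit (counitCofork A) :=
  Cofork.IsColimit.mk' _ fun s =>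
    let k := (Quotient.functor htpy).preimage s.π
    have hk : ⟦k⟧ₕ = s.π := (Quotient.functor htpy).map_preimage s.π
    have hrel := rel_of_coequalizes k (hk ▸ s.condition)
    ⟨⟦homOfRel k.f₀ hrel⟧ₕ, by
      rw [← hk, ← counit_comp_homOfRel k hrel, Functor.map_comp]
      rfl,
    fun {m} hm => by
      refine (cancel_epi ⟦counit A⟧ₕ).mp ?_
      rw [← Functor.map_comp, counit_comp_homOfRel, hk]
      exact hm⟩

lemma map_discHom_comp_counit_surjective (X : C) (A : EqTwoGpd C) :
    Function.Surjective fun u : X ⟶ A.X₀ => ⟦discHom u ≫ counit A⟧ₕ := by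
  intro f
  obtain ⟨k, rfl⟩ := (Quotient.functor htpy).map_surjective f
  exact ⟨k.f₀, CategoryTheory.Quotient.sound _ (htpy_of_f₀_eq (Category.comp_id k.f₀))⟩

lemma map_discHom_comp_counit_eq_iff {X : C} {A : EqTwoGpd C} (u v : X ⟶ A.X₀) :
    ⟦discHom u ≫ counit A⟧ₕ = ⟦discHom v ≫ counit A⟧ₕ ↔ A.Rel u v := by
  rw [map_eq_iff]
  simp [discHom]

end EqTwoGpd

/-- for any `X : C`, the functor `Hom(X, -)` on the homotopy category
`E_h^{(2)}(C)` of equivalence 2-groupoids sends the coequalizer of the two projections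
`A₁ ⇉ A₀` of an equivalence 2-groupoid `A` to the quotient of `Hom(X, A₀)` by the
relation `u ~ v iff (u, v) : X ⟶ A₀ × A₀ factors through A₁`. -/
theorem hom_functor_preserves_coequalizer_of_two_groupoid
    (X : C) (A : EqTwoGpd C)
    (c : Cofork ((CategoryTheory.Quotient.functor (htpy (C := C))).map (proj₀ A))
      ((CategoryTheory.Quotient.functor (htpy (C := C))).map (proj₁ A)))
    (hc : IsColimit c) :
    Function.Surjective (fun u : X ⟶ A.X₀ =>
      (CategoryTheory.Quotient.functor (htpy (C := C))).map (discHom u) ≫ c.π) ∧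
    ∀ u v : X ⟶ A.X₀,
      ((CategoryTheory.Quotient.functor (htpy (C := C))).map (discHom u) ≫ c.π =
        (CategoryTheory.Quotient.functor (htpy (C := C))).map (discHom v) ≫ c.π ↔
      ∃ h : X ⟶ A.X₁, h ≫ A.d₀ = u ∧ h ≫ A.d₁ = v) := by
  let e : (CategoryTheory.Quotient.functor htpy).obj A ≅ c.pt :=
    (isColimitCounitCofork A).coconePointUniqueUpToIso hc
  have hπ : c.π = ⟦counit A⟧ₕ ≫ e.hom :=
    ((isColimitCounitCofork A).comp_coconePointUniqueUpToIso_hom hc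
      WalkingParallelPair.one).symm
  have hπu (u : X ⟶ A.X₀) : ⟦discHom u⟧ₕ ≫ c.π = ⟦discHom u ≫ counit A⟧ₕ ≫ e.hom := by
    rw [hπ, Functor.map_comp, Category.assoc]
  simp only [hπu, cancel_mono, map_discHom_comp_counit_eq_iff]
  refine ⟨fun w => ?_, fun u v => Iff.rfl⟩
  obtain ⟨u, hu⟩ := map_discHom_comp_counit_surjective X A (w ≫ e.inv)
  exact ⟨u, by simp [hu]⟩
end
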